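/- There is an adjoint quintuple between FintypeCat and the category Dir of Dirichlet functors: the functor n ↦ n·0^𝓎 (the n-fold coproduct of the presheaf Fin(–, 0)) is left adjoint to evaluation at 0 (D ↦ D(0)), which is left adjoint to the constant functor (n ↦ the constant presheaf with value n), which is left adjoint to evaluation at 1 (D ↦ D(1)), which is left adjoint to the Yoneda embedding restricted to Dir (n ↦ Fin(–, n)). -/

import Mathlib

/- STATEMENT 11: There is an adjoint quintuple between `FintypeCat` and the category `Dir` of
Dirichlet functors: `n ↦ n·0^𝓎` (the `n`-fold coproduct of `Fin(–, 0)`) is left adjoint to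
evaluation at `0` (`D ↦ D(0)`), which is left adjoint to the constant functor (`n ↦` the
`n`-fold coproduct of the terminal presheaf `Fin(–, 1)`), which is left adjoint to evaluation
at `1` (`D ↦ D(1)`), which is left adjoint to the Yoneda embedding restricted to `Dir`
(`n ↦ Fin(–, n)`). -/

open CategoryTheory CategoryTheory.Limits Opposite

noncomputable section

attribute [local instance] FintypeCat.fintype

noncomputable instance (X Y : FintypeCat.{0}) : Fintype (X ⟶ Y) := by
  classical
  exact Fintype.ofInjective (fun f : X ⟶ Y => (fun x => f x : X → Y))
    (fun f g h => FintypeCat.hom_ext _ _ (fun x => congrFun h x))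

/-- The finite coproduct `∐ᵢ Fin(–, dᵢ)` of representable presheaves `FintypeCatᵒᵖ ⥤ FintypeCat`. -/
def dirichletSum {I : Type} [Fintype I] (d : I → FintypeCat.{0}) :
    FintypeCat.{0}ᵒᵖ ⥤ FintypeCat.{0} where
  obj X := FintypeCat.of (Σ i, (X.unop ⟶ d i))
  map f := FintypeCat.homMk (fun x => ⟨x.1, f.unop ≫ x.2⟩)

/-- A Dirichlet functor is a finite coproduct of representable presheaves. -/
def IsDirichlet (D : FintypeCat.{0}ᵒᵖ ⥤ FintypeCat.{0}) : Prop :=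
  ∃ (I : Type) (_ : Fintype I) (d : I → FintypeCat.{0}), Nonempty (D ≅ dirichletSum d)

/-- The category of Dirichlet functors. -/
abbrev DirCat := ObjectProperty.FullSubcategory IsDirichlet

/-- The empty finite set `0`. -/
abbrev X0 : FintypeCat.{0} := FintypeCat.of PEmpty

/-- A one-element finite set `1`. -/
abbrev X1 : FintypeCat.{0} := FintypeCat.of PUnit

/-! `n·k^𝓎` is a coproduct of `n` copies of the representable `Fin(–, k)`, so by Yoneda a map
`n·k^𝓎 ⟶ D` is an `n`-tuple of elements of `D(k)`: this gives `n·0^𝓎 ⊣ D(0)` and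
`n·1^𝓎 ⊣ D(1)`. Since `1` is terminal, a map from `D` to the constant presheaf `n·1^𝓎` is a
natural family of functions `D(X) → n`, and since `0` is initial, such a family is determined by
its component at `0`. Since elements of `X` are maps `1 ⟶ X`, a map `D ⟶ Fin(–, n)` sends
`x ∈ D(X)` to `a ↦ f(D(a)(x))` for its component `f : D(1) → n` at `1`. -/

namespace FunctorToFintypeCat

variable {C : Type*} [Category C] (F : C ⥤ FintypeCat)

lemma map_apply_of_eq_id {X : C} {f : X ⟶ X} (w : f = 𝟙 X) (x : F.obj X) : F.map f x = x := by
  subst w; rw [F.map_id]; rfl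

lemma map_map_apply_of_comp_eq {X Y Z : C} (f : X ⟶ Y) (g : Y ⟶ Z) {h : X ⟶ Z} (w : f ≫ g = h)
    (x : F.obj X) : F.map g (F.map f x) = F.map h x := by
  subst w; rw [F.map_comp]; rfl

end FunctorToFintypeCat

instance (X : FintypeCat.{0}) : Unique (X0 ⟶ X) where
  default := FintypeCat.homMk PEmpty.elim
  uniq _ := by ext e; exact e.elim

instance (X : FintypeCat.{0}) : Unique (X ⟶ X1) where
  default := FintypeCat.homMk fun _ => PUnit.unit
  uniq _ := rfl

def pointHom {X : FintypeCat.{0}} (x : X) : X1 ⟶ X := FintypeCat.homMk fun _ => x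

def dirMonomial (k : FintypeCat.{0}) : FintypeCat.{0} ⥤ DirCat where
  obj n := ⟨dirichletSum (fun _ : n => k), n, inferInstance, _, ⟨Iso.refl _⟩⟩
  map f := ObjectProperty.homMk { app := fun _ => FintypeCat.homMk fun x => ⟨f x.1, x.2⟩ }

def dirEval (k : FintypeCat.{0}) : DirCat ⥤ FintypeCat.{0} :=
  ObjectProperty.ι IsDirichlet ⋙ (evaluation _ _).obj (op k)

def dirYoneda : FintypeCat.{0} ⥤ DirCat where
  obj n := ⟨dirichletSum (fun _ : PUnit => n), PUnit, inferInstance, _, ⟨Iso.refl _⟩⟩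
  map f := ObjectProperty.homMk { app := fun _ => FintypeCat.homMk fun x => ⟨x.1, x.2 ≫ f⟩ }

def dirMonomialAdjEval (k : FintypeCat.{0}) : dirMonomial k ⊣ dirEval k :=
  Adjunction.mkOfHomEquiv
    { homEquiv := fun n D =>
        { toFun := fun α => FintypeCat.homMk fun i => α.hom.app (op k) ⟨i, 𝟙 k⟩
          invFun := fun f => ObjectProperty.homMk
            { app := fun _ => FintypeCat.homMk fun x => D.obj.map x.2.op (f x.1)
              naturality := fun _ _ g => by
                ext x
                exact (FunctorToFintypeCat.map_map_apply_of_comp_eq D.obj x.2.op g rfl (f x.1)).symm }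
          left_inv := fun α => by
            ext X x
            exact (FunctorToFintypeCat.naturality _ _ α.hom x.2.op ⟨x.1, 𝟙 k⟩).symm
          right_inv := fun f => by
            ext
            exact FunctorToFintypeCat.map_apply_of_eq_id D.obj rfl _ } }

def dirEvalZeroAdjConst : dirEval X0 ⊣ dirMonomial X1 :=
  Adjunction.mkOfHomEquiv
    { homEquiv := fun D n =>
        { toFun := fun f => ObjectProperty.homMk
            { app := fun X => FintypeCat.homMk fun x =>
                ⟨f (D.obj.map (default : X0 ⟶ X.unop).op x), default⟩
              naturality := fun X Y g => by
                ext x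
                refine Sigma.ext (congrArg f ?_) (Subsingleton.helim rfl _ _)
                exact FunctorToFintypeCat.map_map_apply_of_comp_eq D.obj g _
                  (Quiver.Hom.unop_inj (Subsingleton.elim _ _)) x }
          invFun := fun α => FintypeCat.homMk fun z => (α.hom.app (op X0) z).1
          left_inv := fun f => by
            ext z
            exact congrArg f (FunctorToFintypeCat.map_apply_of_eq_id D.obj
              (Quiver.Hom.unop_inj (Subsingleton.elim _ _)) z)
          right_inv := fun α => by
            ext X x
            refine Sigma.ext ?_ (Subsingleton.helim rfl _ _)
            exact (congrArg Sigma.fst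
              (FunctorToFintypeCat.naturality _ _ α.hom (default : X0 ⟶ X.unop).op x) :) } }

def dirEvalOneAdjYoneda : dirEval X1 ⊣ dirYoneda :=
  Adjunction.mkOfHomEquiv
    { homEquiv := fun D n =>
        { toFun := fun f => ObjectProperty.homMk
            { app := fun X => FintypeCat.homMk fun x =>
                ⟨PUnit.unit, FintypeCat.homMk fun a => f (D.obj.map (pointHom a).op x)⟩
              naturality := fun X Y g => by
                ext x
                refine Sigma.ext rfl (heq_of_eq ?_)
                ext a
                exact congrArg f (FunctorToFintypeCat.map_map_apply_of_comp_eq D.obj g _ rfl x) }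
          invFun := fun α => FintypeCat.homMk fun z => (α.hom.app (op X1) z).2 PUnit.unit
          left_inv := fun f => by
            ext z
            exact congrArg f (FunctorToFintypeCat.map_apply_of_eq_id D.obj rfl z)
          right_inv := fun α => by
            ext X x
            refine Sigma.ext rfl (heq_of_eq ?_)
            ext a
            exact congrArg (·.2 PUnit.unit)
              (FunctorToFintypeCat.naturality _ _ α.hom (pointHom a).op x) } }

theorem dir_adjoint_quintuple :
    ∃ (L : FintypeCat.{0} ⥤ DirCat) (E0 : DirCat ⥤ FintypeCat.{0})
      (Cst : FintypeCat.{0} ⥤ DirCat) (E1 : DirCat ⥤ FintypeCat.{0})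
      (Y : FintypeCat.{0} ⥤ DirCat),
      -- `L` sends a finite set `n` to `n·0^𝓎`, the `n`-fold coproduct of `Fin(–, 0)`
      (∀ n : FintypeCat.{0}, Nonempty ((L.obj n).obj ≅ dirichletSum (fun _ : n => X0))) ∧
      -- `E0` is evaluation at `0`
      (∀ D : DirCat, Nonempty (E0.obj D ≅ D.obj.obj (op X0))) ∧
      -- `Cst` sends a finite set `n` to the constant presheaf `n`,
      -- the `n`-fold coproduct of the terminal presheaf `Fin(–, 1)`
      (∀ n : FintypeCat.{0}, Nonempty ((Cst.obj n).obj ≅ dirichletSum (fun _ : n => X1))) ∧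
      -- `E1` is evaluation at `1`
      (∀ D : DirCat, Nonempty (E1.obj D ≅ D.obj.obj (op X1))) ∧
      -- `Y` is the Yoneda embedding `n ↦ Fin(–, n)`
      (∀ n : FintypeCat.{0}, Nonempty ((Y.obj n).obj ≅ dirichletSum (fun _ : PUnit => n))) ∧
      -- the adjoint quintuple `L ⊣ E0 ⊣ Cst ⊣ E1 ⊣ Y`
      Nonempty (L ⊣ E0) ∧ Nonempty (E0 ⊣ Cst) ∧ Nonempty (Cst ⊣ E1) ∧ Nonempty (E1 ⊣ Y) :=
  ⟨dirMonomial X0, dirEval X0, dirMonomial X1, dirEval X1, dirYoneda,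
    fun _ => ⟨Iso.refl _⟩, fun _ => ⟨Iso.refl _⟩, fun _ => ⟨Iso.refl _⟩, fun _ => ⟨Iso.refl _⟩,
    fun _ => ⟨Iso.refl _⟩, ⟨dirMonomialAdjEval X0⟩, ⟨dirEvalZeroAdjConst⟩,
    ⟨dirMonomialAdjEval X1⟩, ⟨dirEvalOneAdjYoneda⟩⟩
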